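/- Let H be a complex inner product space and u a sequence in H. Then for the BDF2 operator D̂ defined by (D̂u)^n = (3/2)u^n - 2u^{n-1} + (1/2)u^{n-2}, and with ũ^{n+1} = 2u^n - u^{n-1} and second difference (D²u)^n = u^n - 2u^{n-1} + u^{n-2}, one has Re⟨u^n, (D̂u)^n⟩ = (1/4)(|u^n|² + |ũ^{n+1}|² - |u^{n-1}|² - |ũ^n|²) + (1/4)|(D²u)^n|² for all n ≥ 2. -/

import Mathlib

open scoped InnerProductSpace

theorem re_inner_bdf2_eq {𝕜 E : Type*} [RCLike 𝕜] [NormedAddCommGroup E] [InnerProductSpace 𝕜 E]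
    (a b c : E) :
    RCLike.re ⟪a, ((3 : 𝕜) / 2) • a - (2 : 𝕜) • b + ((1 : 𝕜) / 2) • c⟫_𝕜 =
      (1 / 4) * (‖a‖ ^ 2 + ‖(2 : 𝕜) • a - b‖ ^ 2 - ‖b‖ ^ 2 - ‖(2 : 𝕜) • b - c‖ ^ 2) +
        (1 / 4) * ‖a - (2 : 𝕜) • b + c‖ ^ 2 := by
  -- real coefficients make `re` commute with the scalars via `RCLike.re_ofReal_mul`
  have h32 : (3 / 2 : 𝕜) = ((3 / 2 : ℝ) : 𝕜) := by push_cast; rfl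
  have h12 : (1 / 2 : 𝕜) = ((1 / 2 : ℝ) : 𝕜) := by push_cast; rfl
  rw [h32, h12]
  simp only [@norm_sub_sq 𝕜, @norm_add_sq 𝕜, norm_smul, inner_sub_right, inner_add_right,
    inner_smul_right, inner_smul_left, inner_sub_left, map_sub, map_add, RCLike.re_ofReal_mul,
    RCLike.ofNat_mul_re, map_ofNat, RCLike.norm_ofNat, inner_self_eq_norm_sq]
  ring

theorem re_inner_u_bdf2_general {H : Type*} [NormedAddCommGroup H] [InnerProductSpace ℂ H]
    (u : ℕ → H) (n : ℕ) :
    (⟪u n, ((3 : ℂ) / 2) • u n - (2 : ℂ) • u (n - 1) + ((1 : ℂ) / 2) • u (n - 2)⟫_ℂ).re =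
      (1 / 4) * (‖u n‖ ^ 2 + ‖(2 : ℂ) • u n - u (n - 1)‖ ^ 2
          - ‖u (n - 1)‖ ^ 2 - ‖(2 : ℂ) • u (n - 1) - u (n - 2)‖ ^ 2) +
        (1 / 4) * ‖u n - (2 : ℂ) • u (n - 1) + u (n - 2)‖ ^ 2 :=
  re_inner_bdf2_eq (𝕜 := ℂ) (u n) (u (n - 1)) (u (n - 2))

/-- `Re⟨u^n, (D̂u)^n⟩ = (1/4)(|u^n|² + |ũ^{n+1}|² - |u^{n-1}|² - |ũ^n|²) + (1/4)|(D²u)^n|²`,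
where `D̂` is the BDF2 operator, `ũ^{n+1} = 2u^n - u^{n-1}` and `D²` is the second
backward difference. -/
theorem re_inner_u_bdf2 {H : Type*} [NormedAddCommGroup H] [InnerProductSpace ℂ H]
    (u : ℕ → H) (n : ℕ) (hn : 2 ≤ n) :
    (⟪u n, ((3 : ℂ) / 2) • u n - (2 : ℂ) • u (n - 1) + ((1 : ℂ) / 2) • u (n - 2)⟫_ℂ).re =
      (1 / 4) * (‖u n‖ ^ 2 + ‖(2 : ℂ) • u n - u (n - 1)‖ ^ 2
          - ‖u (n - 1)‖ ^ 2 - ‖(2 : ℂ) • u (n - 1) - u (n - 2)‖ ^ 2) +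
        (1 / 4) * ‖u n - (2 : ℂ) • u (n - 1) + u (n - 2)‖ ^ 2 :=
  re_inner_u_bdf2_general u n
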